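/- For the Nwogu coefficients a = −1/15, b = 0, c = 0, d = 2/5, the function x ↦ (1 + x²/15)/(1 + (2/5) x²) − tanh(x)/x is O(x⁶) as x → 0 within ℝ \ {0}; that is, the linearized Nwogu system matches the Euler dispersion relation up to and including the fourth-order term. -/

import Mathlib

open Filter Topology Asymptotics

/-!
Writing `tanh x / x = sinh x / (x cosh x)`, the difference equals
`N(x) / (x (1 + 2x²/5) cosh x)` with `N(x) = (1 + x²/15) x cosh x - (1 + 2x²/5) sinh x`.
Replacing `cosh` and `sinh` by their Taylor polynomials of degree 6 changes `N` by `O(x⁷)`, and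
for the Nwogu coefficients the resulting polynomial is `x⁷ (1/1200 + x²/10800)`: the coefficients
of `x`, `x³`, `x⁵` cancel. Dividing by `x` costs one order, leaving `O(x⁶)`.
-/

namespace Real

lemma exp_neg_sub_sum_range_isBigO_pow (n : ℕ) :
    (fun x ↦ exp (-x) - ∑ i ∈ Finset.range n, (-x) ^ i / i.factorial) =O[𝓝 0] (· ^ n) := by
  have h := (exp_sub_sum_range_isBigO_pow n).comp_tendsto (by simpa using (tendsto_neg (0 : ℝ)))
  exact h.trans (isBigO_of_le _ fun x ↦ by simp)

lemma cosh_sub_taylor_isBigO :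
    (fun x ↦ cosh x - (1 + x ^ 2 / 2 + x ^ 4 / 24 + x ^ 6 / 720)) =O[𝓝 0] (· ^ 7) := by
  refine (((exp_sub_sum_range_isBigO_pow 7).add (exp_neg_sub_sum_range_isBigO_pow 7)).const_mul_left
    (1 / 2)).congr_left fun x ↦ ?_
  simp [cosh_eq, Finset.sum_range_succ, Nat.factorial]
  ring

lemma sinh_sub_taylor_isBigO :
    (fun x ↦ sinh x - (x + x ^ 3 / 6 + x ^ 5 / 120)) =O[𝓝 0] (· ^ 7) := by
  refine (((exp_sub_sum_range_isBigO_pow 7).sub (exp_neg_sub_sum_range_isBigO_pow 7)).const_mul_left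
    (1 / 2)).congr_left fun x ↦ ?_
  simp [sinh_eq, Finset.sum_range_succ, Nat.factorial]
  ring

end Real

lemma Asymptotics.IsBigO.div_id_of_pow_succ {f : ℝ → ℝ} {n : ℕ}
    (h : f =O[𝓝 0] (· ^ (n + 1))) : (fun x ↦ f x / x) =O[𝓝[≠] 0] (· ^ n) := by
  refine ((h.mono nhdsWithin_le_nhds).mul (isBigO_refl (·⁻¹) _)).congr' (by simp [div_eq_mul_inv])
    ?_
  filter_upwards [self_mem_nhdsWithin] with x (hx : x ≠ 0)
  field_simp
  ring

open Real in
lemma nwogu_numerator_isBigO :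
    (fun x ↦ (1 + x ^ 2 / 15) * x * cosh x - (1 + 2 / 5 * x ^ 2) * sinh x) =O[𝓝 0] (· ^ 7) := by
  have bounded {p : ℝ → ℝ} (hp : Continuous p) : p =O[𝓝 0] (fun _ ↦ (1 : ℝ)) :=
    (hp.tendsto 0).isBigO_one ℝ
  have hcosh := (bounded (p := fun x ↦ (1 + x ^ 2 / 15) * x) (by fun_prop)).mul cosh_sub_taylor_isBigO
  have hsinh := (bounded (p := fun x ↦ 1 + 2 / 5 * x ^ 2) (by fun_prop)).mul sinh_sub_taylor_isBigO
  have hpoly := (bounded (p := fun x ↦ 1 / 1200 + x ^ 2 / 10800) (by fun_prop)).mul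
    (isBigO_refl (· ^ 7) (𝓝 (0 : ℝ)))
  exact ((hcosh.sub hsinh).add hpoly).congr (fun x ↦ by ring) (fun x ↦ by simp)

/-- For the Nwogu coefficients a = −1/15, b = 0, c = 0, d = 2/5,
(1 + x²/15)/(1 + (2/5)x²) − tanh(x)/x = O(x⁶) as x → 0 within ℝ \ {0}. -/
theorem nwogu_matches_euler_fourth_order :
    (fun x : ℝ => (1 + x^2/15) / (1 + (2/5) * x^2) - Real.tanh x / x)
      =O[𝓝[≠] (0:ℝ)] fun x : ℝ => x^6 := by
  have hden : (fun x ↦ ((1 + 2 / 5 * x ^ 2) * Real.cosh x)⁻¹) =O[𝓝[≠] (0 : ℝ)]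
      (fun _ ↦ (1 : ℝ)) := by
    refine (Tendsto.isBigO_one ℝ (c := ((1 + 2 / 5 * 0 ^ 2) * Real.cosh 0)⁻¹) ?_).mono
      nhdsWithin_le_nhds
    exact ((Continuous.tendsto (by fun_prop) 0).inv₀ (by simp))
  refine ((nwogu_numerator_isBigO.div_id_of_pow_succ (n := 6)).mul hden).congr' ?_
    (by simp)
  filter_upwards [self_mem_nhdsWithin] with x (hx : x ≠ 0)
  have : 1 + 2 / 5 * x ^ 2 ≠ 0 := by positivity
  rw [Real.tanh_eq_sinh_div_cosh]
  field_simp [(Real.cosh_pos x).ne']
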